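/- There exists a function T : ℂ → ℂ, complex-differentiable on the open ball B(0,1), with T(x) ∈ ℝ for every real x ∈ B(0,1), such that φ_→(z) = −4·(−z)^{1/2}·(1 + z·T(z)) for every z ∈ B(0,1) with z ∉ [0,∞). -/

import Mathlib

/-!
Writing `-(t z) = t · (-z)` pulls `(-z)^{-1/2}` out of the integral, and `z (-z)^{-1/2} =
-(-z)^{1/2}`, so `φ_→(z) = -2 (-z)^{1/2} ∫₀¹ t^{-1/2} (1 - t z)^{1/2} dt`. The antiderivative
`2 (t^{1/2} - 1)(1 - t z)^{1/2}` vanishes at `t = 1` and equals `-2` at `t = 0`, so integration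
by parts gives `∫₀¹ t^{-1/2} (1 - t z)^{1/2} dt = 2 + z ∫₀¹ (t^{1/2} - 1)(1 - t z)^{-1/2} dt`;
half of the last integral is `T`. For `|z| < 1` and `t ∈ [0, 1]` the point `1 - t z` stays in the
slit plane, so `T` is holomorphic by differentiation under the integral sign, and it is real for
real `z`.
-/

open Complex Metric

/-- `φ_→(z) = 2z·∫_0^1 (1−tz)^{1/2}·(−tz)^{−1/2} dt`, the integral of
`2(1−s)^{1/2}(−s)^{−1/2}` over the straight segment from `0` to `z` (principal powers). -/
noncomputable def phiRight (z : ℂ) : ℂ :=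
  2 * z *
    ∫ t in (0:ℝ)..1, (1 - (t : ℂ) * z) ^ ((1 : ℂ)/2) * (-((t : ℂ) * z)) ^ (-((1 : ℂ)/2))

open Set MeasureTheory intervalIntegral
open scoped Interval

lemma ofReal_mul_cpow {t : ℝ} (ht : 0 ≤ t) (w a : ℂ) :
    ((t : ℂ) * w) ^ a = (t : ℂ) ^ a * w ^ a := by
  rcases eq_or_ne a 0 with rfl | ha
  · simp
  rcases ht.eq_or_lt with rfl | ht
  · simp [zero_cpow ha]
  rcases eq_or_ne w 0 with rfl | hw
  · simp [zero_cpow ha]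
  rw [cpow_def_of_ne_zero (mul_ne_zero (ofReal_ne_zero.2 ht.ne') hw), log_ofReal_mul ht hw,
    cpow_def_of_ne_zero (ofReal_ne_zero.2 ht.ne'), cpow_def_of_ne_zero hw, ofReal_log ht.le,
    add_mul, exp_add]

lemma self_mul_cpow_neg_half (u : ℂ) : u * u ^ (-((1 : ℂ) / 2)) = u ^ ((1 : ℂ) / 2) := by
  rcases eq_or_ne u 0 with rfl | hu
  · simp
  conv_lhs => enter [1]; rw [← cpow_one u]
  rw [← cpow_add _ _ hu]
  norm_num

lemma one_sub_ofReal_mul_mem_slitPlane {z : ℂ} (hz : ‖z‖ < 1) {t : ℝ} (ht : t ∈ Icc (0 : ℝ) 1) :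
    1 - (t : ℂ) * z ∈ slitPlane := by
  rw [sub_eq_add_neg]
  apply mem_slitPlane_of_norm_lt_one
  rw [norm_neg, norm_mul, norm_real, Real.norm_of_nonneg ht.1]
  nlinarith [norm_nonneg z, ht.2]

lemma continuousOn_one_sub_ofReal_mul_cpow {z : ℂ} (hz : ‖z‖ < 1) (a : ℂ) :
    ContinuousOn (fun t : ℝ => (1 - (t : ℂ) * z) ^ a) (Icc 0 1) :=
  (continuous_const.sub (continuous_ofReal.mul continuous_const)).continuousOn.cpow_const
    fun _ ht => one_sub_ofReal_mul_mem_slitPlane hz ht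

lemma hasDerivAt_one_sub_ofReal_mul_cpow {z : ℂ} (hz : ‖z‖ < 1) (a : ℂ) {t : ℝ}
    (ht : t ∈ Icc (0 : ℝ) 1) :
    HasDerivAt (fun s : ℝ => (1 - (s : ℂ) * z) ^ a) (a * (1 - (t : ℂ) * z) ^ (a - 1) * -z) t := by
  have h : HasDerivAt (fun w : ℂ => 1 - w * z) (-z) t := by
    simpa using ((hasDerivAt_id (t : ℂ)).mul_const z).const_sub 1
  exact (h.cpow_const (one_sub_ofReal_mul_mem_slitPlane hz ht)).comp_ofReal

theorem differentiableOn_integral_mul_one_sub_ofReal_mul_cpow {g : ℝ → ℂ}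
    (hg : ContinuousOn g (Icc 0 1)) (a : ℂ) :
    DifferentiableOn ℂ (fun z => ∫ t in (0 : ℝ)..1, g t * (1 - (t : ℂ) * z) ^ a) (ball 0 1) := by
  intro z₀ hz₀
  obtain ⟨ε, hε, hsub⟩ := nhds_basis_closedBall.mem_iff.1 (isOpen_ball.mem_nhds hz₀)
  have hnorm : ∀ z ∈ closedBall z₀ ε, ‖z‖ < 1 := fun z hz => mem_ball_zero_iff.1 (hsub hz)
  have hIoc : Ι (0 : ℝ) 1 ⊆ Icc 0 1 := by
    rw [uIoc_of_le zero_le_one]; exact Ioc_subset_Icc_self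
  have hF : ∀ z ∈ closedBall z₀ ε,
      ContinuousOn (fun t : ℝ => g t * (1 - (t : ℂ) * z) ^ a) (Icc 0 1) :=
    fun z hz => hg.mul (continuousOn_one_sub_ofReal_mul_cpow (hnorm z hz) a)
  set F' : ℂ → ℝ → ℂ := fun z t => g t * (a * (1 - (t : ℂ) * z) ^ (a - 1) * -t)
  have hF' : ContinuousOn (fun p : ℂ × ℝ => F' p.1 p.2) (closedBall z₀ ε ×ˢ Icc 0 1) := by
    refine (hg.comp continuousOn_snd fun p hp => hp.2).mul
      ((continuousOn_const.mul ?_).mul (continuous_ofReal.comp continuous_snd).neg.continuousOn)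
    exact (continuous_const.sub ((continuous_ofReal.comp continuous_snd).mul
      continuous_fst)).continuousOn.cpow_const
        fun p hp => one_sub_ofReal_mul_mem_slitPlane (hnorm p.1 hp.1) hp.2
  obtain ⟨C, hC⟩ :=
    ((isCompact_closedBall z₀ ε).prod isCompact_Icc).exists_bound_of_continuousOn hF'
  have hdiff : ∀ t ∈ Icc (0 : ℝ) 1, ∀ z ∈ closedBall z₀ ε,
      HasDerivAt (fun z => g t * (1 - (t : ℂ) * z) ^ a) (F' z t) z := by
    intro t ht z hz
    have h : HasDerivAt (fun w : ℂ => 1 - (t : ℂ) * w) (-t) z := by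
      simpa using ((hasDerivAt_id z).const_mul (t : ℂ)).const_sub 1
    exact (h.cpow_const (one_sub_ofReal_mul_mem_slitPlane (hnorm z hz) ht)).const_mul (g t)
  have hderiv := hasDerivAt_integral_of_dominated_loc_of_deriv_le (μ := volume) (F' := F')
    (bound := fun _ => C) (closedBall_mem_nhds z₀ hε)
    (Filter.eventually_of_mem (closedBall_mem_nhds z₀ hε) fun z hz =>
      ((hF z hz).mono hIoc).aestronglyMeasurable measurableSet_uIoc)
    ((hF z₀ (mem_closedBall_self hε.le)).intervalIntegrable_of_Icc zero_le_one)
    ((hF'.comp (continuousOn_const.prodMk continuousOn_id) fun t ht =>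
      ⟨mem_closedBall_self hε.le, hIoc ht⟩).aestronglyMeasurable measurableSet_uIoc)
    (Filter.Eventually.of_forall fun t ht z hz => hC (z, t) ⟨hz, hIoc ht⟩)
    intervalIntegrable_const
    (Filter.Eventually.of_forall fun t ht => hdiff t (hIoc ht))
  exact hderiv.2.differentiableAt.differentiableWithinAt

noncomputable def phiRightRemainder (z : ℂ) : ℂ :=
  (1 / 2 : ℂ) * ∫ t in (0 : ℝ)..1,
    ((t : ℂ) ^ ((1 : ℂ) / 2) - 1) * (1 - (t : ℂ) * z) ^ (-((1 : ℂ) / 2))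

lemma differentiableOn_phiRightRemainder : DifferentiableOn ℂ phiRightRemainder (ball 0 1) :=
  (differentiableOn_integral_mul_one_sub_ofReal_mul_cpow
    ((continuous_ofReal_cpow_const (by norm_num)).sub continuous_const).continuousOn _).const_mul _

lemma phiRightRemainder_ofReal_im {x : ℝ} (hx : |x| ≤ 1) : (phiRightRemainder x).im = 0 := by
  have h : EqOn (fun t : ℝ => ((t : ℂ) ^ ((1 : ℂ) / 2) - 1) * (1 - (t : ℂ) * x) ^ (-((1 : ℂ) / 2)))
      (fun t : ℝ => (((t ^ (1 / 2 : ℝ) - 1) * (1 - t * x) ^ (-(1 / 2) : ℝ) : ℝ) : ℂ))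
      (uIcc 0 1) := by
    intro t ht
    rw [uIcc_of_le zero_le_one] at ht
    have hx' : 0 ≤ 1 - t * x := by nlinarith [abs_le.1 hx, ht.1, ht.2]
    push_cast [ofReal_cpow ht.1, ofReal_cpow hx']
    norm_num
  rw [phiRightRemainder, integral_congr h, intervalIntegral.integral_ofReal]
  simp

lemma integral_cpow_neg_half_mul_one_sub_cpow_half {z : ℂ} (hz : ‖z‖ < 1) :
    ∫ t in (0 : ℝ)..1, (t : ℂ) ^ (-((1 : ℂ) / 2)) * (1 - (t : ℂ) * z) ^ ((1 : ℂ) / 2)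
      = 2 + 2 * z * phiRightRemainder z := by
  have hderiv : ∀ t ∈ Ioo (0 : ℝ) 1, HasDerivAt
      (fun s : ℝ => 2 * ((s : ℂ) ^ ((1 : ℂ) / 2) - 1) * (1 - (s : ℂ) * z) ^ ((1 : ℂ) / 2))
      ((t : ℂ) ^ (-((1 : ℂ) / 2)) * (1 - (t : ℂ) * z) ^ ((1 : ℂ) / 2)
        - z * (((t : ℂ) ^ ((1 : ℂ) / 2) - 1) * (1 - (t : ℂ) * z) ^ (-((1 : ℂ) / 2)))) t := by
    intro t ht
    have h1 := hasDerivAt_ofReal_cpow_const ht.1.ne' (r := (1 : ℂ) / 2) (by norm_num)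
    have h2 := hasDerivAt_one_sub_ofReal_mul_cpow hz ((1 : ℂ) / 2) (Ioo_subset_Icc_self ht)
    refine (((h1.sub_const 1).const_mul 2).mul h2).congr_deriv ?_
    rw [show (1 : ℂ) / 2 - 1 = -(1 / 2) by norm_num]
    ring
  have hcont : ContinuousOn
      (fun s : ℝ => 2 * ((s : ℂ) ^ ((1 : ℂ) / 2) - 1) * (1 - (s : ℂ) * z) ^ ((1 : ℂ) / 2))
      (Icc 0 1) :=
    (continuousOn_const.mul ((continuous_ofReal_cpow_const (by norm_num)).sub
      continuous_const).continuousOn).mul (continuousOn_one_sub_ofReal_mul_cpow hz _)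
  have hint₁ : IntervalIntegrable
      (fun t : ℝ => (t : ℂ) ^ (-((1 : ℂ) / 2)) * (1 - (t : ℂ) * z) ^ ((1 : ℂ) / 2)) volume 0 1 :=
    (intervalIntegrable_cpow' (by norm_num)).mul_continuousOn
      (by simpa [uIcc_of_le zero_le_one] using continuousOn_one_sub_ofReal_mul_cpow hz _)
  have hint₂ : IntervalIntegrable (fun t : ℝ =>
      z * (((t : ℂ) ^ ((1 : ℂ) / 2) - 1) * (1 - (t : ℂ) * z) ^ (-((1 : ℂ) / 2)))) volume 0 1 :=
    (continuousOn_const.mul ((((continuous_ofReal_cpow_const (by norm_num)).sub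
      continuous_const).continuousOn).mul (continuousOn_one_sub_ofReal_mul_cpow hz _))
      ).intervalIntegrable_of_Icc zero_le_one
  have hftc := integral_eq_sub_of_hasDerivAt_of_le zero_le_one hcont hderiv (hint₁.sub hint₂)
  rw [integral_sub hint₁ hint₂, intervalIntegral.integral_const_mul] at hftc
  rw [phiRightRemainder]
  norm_num at hftc ⊢
  linear_combination hftc

lemma phiRight_eq (z : ℂ) :
    phiRight z = -2 * (-z) ^ ((1 : ℂ) / 2) *
      ∫ t in (0 : ℝ)..1, (t : ℂ) ^ (-((1 : ℂ) / 2)) * (1 - (t : ℂ) * z) ^ ((1 : ℂ) / 2) := by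
  have h : EqOn
      (fun t : ℝ => (1 - (t : ℂ) * z) ^ ((1 : ℂ) / 2) * (-((t : ℂ) * z)) ^ (-((1 : ℂ) / 2)))
      (fun t : ℝ => (-z) ^ (-((1 : ℂ) / 2)) *
        ((t : ℂ) ^ (-((1 : ℂ) / 2)) * (1 - (t : ℂ) * z) ^ ((1 : ℂ) / 2))) (uIcc 0 1) := by
    intro t ht
    rw [uIcc_of_le zero_le_one] at ht
    simp only [← mul_neg, ofReal_mul_cpow ht.1]
    ring
  rw [phiRight, integral_congr h, intervalIntegral.integral_const_mul]
  linear_combination (-2 * ∫ t in (0 : ℝ)..1,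
    (t : ℂ) ^ (-((1 : ℂ) / 2)) * (1 - (t : ℂ) * z) ^ ((1 : ℂ) / 2)) * self_mul_cpow_neg_half (-z)

/-- There is a function `T`, analytic on `B(0,1)` and real on real points,
with `φ_→(z) = −4(−z)^{1/2}(1 + zT(z))` off the cut `[0,∞)`. -/
theorem stmt_4 :
    ∃ T : ℂ → ℂ, DifferentiableOn ℂ T (ball (0 : ℂ) 1) ∧
      (∀ x : ℝ, (x : ℂ) ∈ ball (0 : ℂ) 1 → (T x).im = 0) ∧
      ∀ z ∈ ball (0 : ℂ) 1, z ∉ (Complex.ofReal '' Set.Ici 0) →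
        phiRight z = (-4 : ℂ) * (-z) ^ ((1 : ℂ)/2) * (1 + z * T z) := by
  refine ⟨phiRightRemainder, differentiableOn_phiRightRemainder, fun x hx => ?_, fun z hz _ => ?_⟩
  · rw [mem_ball_zero_iff, norm_real, Real.norm_eq_abs] at hx
    exact phiRightRemainder_ofReal_im hx.le
  · rw [phiRight_eq, integral_cpow_neg_half_mul_one_sub_cpow_half (mem_ball_zero_iff.1 hz)]
    ring
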